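/- arXiv:math/0211001 — 5 statements merged into one kernel-verified Lean document; each statement's English description precedes it below -/
import Mathlib

section
/- Let S ⊆ Z_n and ε > 0. If for every subset T ⊆ Z_n, the inequality D_{T+x}(S) < εn holds for all but at most εn elements x ∈ Z_n, then for every interval J ⊆ Z_n one has D_J(S) < 2εn. -/
/-- Discrepancy of `S` in `T` inside `ZMod n`. -/
noncomputable def disc (n : ℕ) (S T : Finset (ZMod n)) : ℝ :=
  |((S ∩ T).card : ℝ) - (S.card : ℝ) * (T.card : ℝ) / n|

/-- An interval of `ZMod n` is the projection of an interval of `ℤ`. -/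
def IsInterval (n : ℕ) (J : Finset (ZMod n)) : Prop :=
  ∃ (a : ℤ) (len : ℕ), J = (Finset.range len).image (fun (i : ℕ) => ((a + (i : ℤ)) : ZMod n))

theorem balance_of_weak_translation (n : ℕ) [NeZero n] (S : Finset (ZMod n)) (ε : ℝ)
    (hε : 0 < ε)
    (h : ∀ T : Finset (ZMod n),
      (((Finset.univ : Finset (ZMod n)).filter
          (fun x => ¬ disc n S (T.image (· + x)) < ε * n)).card : ℝ) ≤ ε * n) :
    ∀ J : Finset (ZMod n), IsInterval n J → disc n S J < 2 * ε * n := by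
  have hn0 : 0 < n := Nat.pos_of_ne_zero (NeZero.ne n)
  have hnR : (0:ℝ) < n := by exact_mod_cast hn0
  have hcardU : (Finset.univ : Finset (ZMod n)).card = n := by
    simp [Finset.card_univ, ZMod.card]
  have hdisc_le : ∀ T : Finset (ZMod n), disc n S T ≤ n := by
    intro T
    have h1 : ((S ∩ T).card : ℝ) ≤ n := by
      have : (S ∩ T).card ≤ n := by simpa [ZMod.card] using Finset.card_le_univ (S ∩ T)
      exact_mod_cast this
    have hS : (S.card : ℝ) ≤ n := by
      have : S.card ≤ n := by simpa [ZMod.card] using Finset.card_le_univ S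
      exact_mod_cast this
    have hT : (T.card : ℝ) ≤ n := by
      have : T.card ≤ n := by simpa [ZMod.card] using Finset.card_le_univ T
      exact_mod_cast this
    have h2 : (0:ℝ) ≤ (S.card : ℝ) * T.card / n := by positivity
    have h3 : (S.card : ℝ) * T.card / n ≤ n := by
      rw [div_le_iff₀ hnR]
      nlinarith [(Nat.cast_nonneg S.card : (0:ℝ) ≤ S.card), (Nat.cast_nonneg T.card : (0:ℝ) ≤ T.card)]
    have h4 : (0:ℝ) ≤ ((S ∩ T).card : ℝ) := Nat.cast_nonneg _
    rw [disc, abs_le]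
    constructor <;> linarith
  intro J hJ
  rcases le_or_gt (n:ℝ) (ε * n) with hcase | hcase
  · calc disc n S J ≤ n := hdisc_le J
      _ < 2 * ε * n := by nlinarith
  -- main case : ε * n < n
  obtain ⟨a, len, rfl⟩ := hJ
  set J : Finset (ZMod n) := (Finset.range len).image (fun i : ℕ => ((a + (i:ℤ)) : ZMod n))
    with hJdef
  have hcard : ∀ x : ZMod n, (J.image (· + x)).card = J.card := fun x =>
    Finset.card_image_of_injective _ (add_left_injective x)
  set c : ℝ := (S.card : ℝ) * (J.card : ℝ) / n with hc
  set D : ZMod n → ℝ := fun x => ((S ∩ J.image (· + x)).card : ℝ) - c with hD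
  have hdiscx : ∀ x : ZMod n, disc n S (J.image (· + x)) = |D x| := by
    intro x
    rw [disc, hcard x]
  have hD0 : disc n S J = |D 0| := by
    have himg : J.image (· + (0 : ZMod n)) = J := by simp
    calc disc n S J = disc n S (J.image (· + (0 : ZMod n))) := by rw [himg]
      _ = |D 0| := hdiscx 0
  -- the key subset facts
  have hsub1 : ∀ x : ZMod n,
      J.image (· + (x + 1)) ⊆ (J.image (· + x)) ∪ {((a + (len:ℤ)) : ZMod n) + x} := by
    intro x y hy
    simp only [hJdef, Finset.mem_image, Finset.mem_range] at hy
    obtain ⟨z, ⟨i, hi, rfl⟩, rfl⟩ := hy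
    by_cases hil : i + 1 < len
    · apply Finset.mem_union_left
      simp only [hJdef, Finset.mem_image, Finset.mem_range]
      exact ⟨((a + ((i+1 : ℕ):ℤ)) : ZMod n), ⟨i + 1, hil, rfl⟩, by push_cast; ring⟩
    · have hil' : i + 1 = len := by omega
      apply Finset.mem_union_right
      simp only [Finset.mem_singleton]
      rw [← hil']
      push_cast
      ring
  have hsub2 : ∀ x : ZMod n,
      J.image (· + x) ⊆ (J.image (· + (x + 1))) ∪ {((a : ℤ) : ZMod n) + x} := by
    intro x y hy
    simp only [hJdef, Finset.mem_image, Finset.mem_range] at hy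
    obtain ⟨z, ⟨i, hi, rfl⟩, rfl⟩ := hy
    rcases Nat.eq_zero_or_pos i with h0 | hpos
    · apply Finset.mem_union_right
      simp only [Finset.mem_singleton, h0]
      push_cast
      ring
    · apply Finset.mem_union_left
      simp only [hJdef, Finset.mem_image, Finset.mem_range]
      refine ⟨((a + ((i - 1 : ℕ):ℤ)) : ZMod n), ⟨i - 1, by omega, rfl⟩, ?_⟩
      have : ((i - 1 : ℕ) : ℤ) = (i : ℤ) - 1 := by omega
      rw [this]
      push_cast
      ring
  have hkey : ∀ (A B : Finset (ZMod n)) (b : ZMod n), A ⊆ B ∪ {b} →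
      ((S ∩ A).card : ℝ) ≤ ((S ∩ B).card : ℝ) + 1 := by
    intro A B b hAB
    have hs : S ∩ A ⊆ (S ∩ B) ∪ {b} := by
      intro y hy
      rw [Finset.mem_inter] at hy
      rcases Finset.mem_union.1 (hAB hy.2) with h' | h'
      · exact Finset.mem_union_left _ (Finset.mem_inter.2 ⟨hy.1, h'⟩)
      · exact Finset.mem_union_right _ h'
    have := (Finset.card_le_card hs).trans (Finset.card_union_le _ _)
    simp only [Finset.card_singleton] at this
    exact_mod_cast this
  have hstep : ∀ x : ZMod n, |D (x + 1) - D x| ≤ 1 := by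
    intro x
    have h1 := hkey _ _ _ (hsub1 x)
    have h2 := hkey _ _ _ (hsub2 x)
    rw [abs_le]
    constructor <;> simp only [hD] <;> linarith
  have hind : ∀ k : ℕ, |D 0| - k ≤ |D (k : ZMod n)| := by
    intro k
    induction k with
    | zero => simp
    | succ k ih =>
      have h1 := hstep (k : ZMod n)
      have h2 : |D (k : ZMod n)| - |D ((k : ZMod n) + 1)| ≤ |D (k : ZMod n) - D ((k : ZMod n) + 1)| :=
        abs_sub_abs_le_abs_sub _ _
      have h3 : |D (k : ZMod n) - D ((k : ZMod n) + 1)| = |D ((k : ZMod n) + 1) - D (k : ZMod n)| :=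
        abs_sub_comm _ _
      have hcast : ((k + 1 : ℕ) : ZMod n) = (k : ZMod n) + 1 := by push_cast; ring
      rw [hcast]
      push_cast
      linarith
  by_contra hcon
  push_neg at hcon
  rw [hD0] at hcon
  set m : ℕ := ⌊ε * n⌋₊ with hm
  have hm1 : (m : ℝ) ≤ ε * n := Nat.floor_le (by positivity)
  have hm2 : ε * n < m + 1 := Nat.lt_floor_add_one _
  have hmn : m + 1 ≤ n := by
    have : (m : ℝ) < n := lt_of_le_of_lt hm1 hcase
    have : m < n := by exact_mod_cast this
    omega
  have hbad : ∀ k ∈ Finset.range (m + 1),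
      (k : ZMod n) ∈ (Finset.univ : Finset (ZMod n)).filter
        (fun x => ¬ disc n S (J.image (· + x)) < ε * n) := by
    intro k hk
    rw [Finset.mem_range] at hk
    rw [Finset.mem_filter]
    refine ⟨Finset.mem_univ _, ?_⟩
    rw [hdiscx, not_lt]
    have h1 := hind k
    have hkm : (k : ℝ) ≤ m := by exact_mod_cast Nat.lt_succ_iff.1 hk
    linarith
  have hinj : Set.InjOn (fun k : ℕ => (k : ZMod n)) (Finset.range (m + 1)) := by
    intro i hi j hj hij
    simp only [Finset.coe_range, Set.mem_Iio] at hi hj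
    have hi' : i < n := by omega
    have hj' : j < n := by omega
    have := congrArg ZMod.val hij
    rwa [ZMod.val_cast_of_lt hi', ZMod.val_cast_of_lt hj'] at this
  have hsubB : (Finset.range (m + 1)).image (fun k : ℕ => (k : ZMod n)) ⊆
      (Finset.univ : Finset (ZMod n)).filter
        (fun x => ¬ disc n S (J.image (· + x)) < ε * n) := by
    intro y hy
    obtain ⟨k, hk, rfl⟩ := Finset.mem_image.1 hy
    exact hbad k hk
  have hcardB := Finset.card_le_card hsubB
  rw [Finset.card_image_of_injOn hinj, Finset.card_range] at hcardB
  have := h J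
  have : ((m + 1 : ℕ) : ℝ) ≤ ε * n := le_trans (by exact_mod_cast hcardB) this
  push_cast at this
  linarith
end

section
/- For any σ ∈ S_n, τ ∈ S_m with m < n, one has (n - m)·X^τ(σ) = Σ_{τ' ∈ S_{m+1}} X^τ(τ')·X^{τ'}(σ), where X^τ(σ) counts occurrences of the pattern τ in σ. -/
/-!
Double counting. An occurrence `f` of `τ` in `σ` together with a point `x` outside its image
determines the `(m+1)`-point set `image f ∪ {x}`; enumerating it increasingly by `g` gives an
occurrence of its pattern `τ'` in `σ`, and if `x = g k` then `f = g ∘ k.succAbove`, where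
`k.succAbove` is an occurrence of `τ` in `τ'`. Conversely every triple `(τ', k, g)` of this kind
arises exactly once, and since the strictly increasing maps `Fin m → Fin (m+1)` are exactly the
`k.succAbove`, for fixed `τ'` there are `X^τ(τ')` choices of `k`.
-/

/-- `patCount τ σ` = number of occurrences of the pattern `τ` in `σ`, i.e. the number of
strictly increasing `f : Fin m → Fin n` (whose image plays the role of the set `A`) such
that `σ` restricted to the image of `f` is order-isomorphic to `τ`. -/
def patCount {m n : ℕ} (τ : Equiv.Perm (Fin m)) (σ : Equiv.Perm (Fin n)) : ℕ :=
  ((Finset.univ : Finset (Fin m → Fin n)).filter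
    (fun f => (∀ i j, i < j → f i < f j) ∧ ∀ i j, τ i < τ j ↔ σ (f i) < σ (f j))).card

open Equiv Finset Function

section RelativeOrder

variable {k : ℕ}

theorem Equiv.Perm.eq_of_lt_iff_lt {p q : Perm (Fin k)} (h : ∀ i j, p i < p j ↔ q i < q j) :
    p = q := by
  have hmono : StrictMono (q ∘ p.symm) := fun i j hij => by
    simpa using (h (p.symm i) (p.symm j)).1 (by simpa using hij)
  ext1 i
  simpa using (hmono.apply_eq (x := p i)).symm

theorem exists_perm_lt_iff_lt {α : Type*} [LinearOrder α] {y : Fin k → α} (hy : Injective y) :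
    ∃ p : Perm (Fin k), ∀ i j, p i < p j ↔ y i < y j := by
  set s := Tuple.sort y
  have hs : StrictMono (y ∘ s) :=
    (Tuple.monotone_sort y).strictMono_of_injective (hy.comp s.injective)
  refine ⟨s⁻¹, fun i j => ?_⟩
  simpa using (hs.lt_iff_lt (a := s⁻¹ i) (b := s⁻¹ j)).symm

end RelativeOrder

section SuccAbove

variable {m : ℕ}

theorem Fin.exists_succAbove_eq_of_strictMono {h : Fin m → Fin (m + 1)} (hh : StrictMono h) :
    ∃ k : Fin (m + 1), k.succAbove = h := by
  classical
  obtain ⟨k, hk⟩ : ∃ k, k ∉ Set.range h := by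
    by_contra! hsurj
    simpa using Fintype.card_le_of_surjective h fun k => hsurj k
  refine ⟨k, ((Fin.strictMono_succAbove k).range_inj hh).1 (Eq.symm ?_)⟩
  refine Set.eq_of_subset_of_card_le (fun y hy => ?_) ?_
  · simpa using (ne_of_mem_of_not_mem hy hk)
  · rw [Set.card_range_of_injective hh.injective,
      Set.card_range_of_injective Fin.succAbove_right_injective]

theorem Fin.range_comp_succAbove {α : Type*} {g : Fin (m + 1) → α} (hg : Injective g)
    (k : Fin (m + 1)) : Set.range (g ∘ k.succAbove) = Set.range g \ {g k} := by
  rw [Set.range_comp, Fin.range_succAbove, Set.image_compl_eq_range_sdiff_image hg,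
    Set.image_singleton]

theorem StrictMono.eq_of_comp_succAbove_eq {α : Type*} [Preorder α] {g₁ g₂ : Fin (m + 1) → α}
    (hg₁ : StrictMono g₁) (hg₂ : StrictMono g₂) {k₁ k₂ : Fin (m + 1)}
    (hcomp : g₁ ∘ k₁.succAbove = g₂ ∘ k₂.succAbove) (hk : g₁ k₁ = g₂ k₂) :
    g₁ = g₂ ∧ k₁ = k₂ := by
  have hrange : Set.range g₁ = Set.range g₂ := by
    have key : ∀ {g : Fin (m + 1) → α}, StrictMono g → ∀ k,
        Set.range g = insert (g k) (Set.range (g ∘ k.succAbove)) := fun hg k => by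
      rw [Fin.range_comp_succAbove hg.injective, Set.insert_sdiff_singleton,
        Set.insert_eq_of_mem (Set.mem_range_self k)]
    rw [key hg₁ k₁, key hg₂ k₂, hcomp, hk]
  have hg : g₁ = g₂ := (hg₁.range_inj hg₂).1 hrange
  exact ⟨hg, hg₂.injective (hg ▸ hk)⟩

theorem StrictMono.exists_comp_succAbove_eq {α : Type*} [LinearOrder α] {f : Fin m → α}
    (hf : StrictMono f) {x : α} (hx : x ∉ Set.range f) :
    ∃ g : Fin (m + 1) → α, StrictMono g ∧ ∃ k, g ∘ k.succAbove = f ∧ g k = x := by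
  classical
  set s := insert x (univ.image f)
  have hs : #s = m + 1 := by
    rw [card_insert_of_notMem (by simpa using hx), card_image_of_injective _ hf.injective,
      card_fin]
  set g := s.orderEmbOfFin hs
  have hrange : Set.range g = insert x (Set.range f) := by simp [g, s, range_orderEmbOfFin]
  obtain ⟨k, hk⟩ : x ∈ Set.range g := hrange ▸ Set.mem_insert x _
  refine ⟨g, g.strictMono, k,
    ((g.strictMono.comp (Fin.strictMono_succAbove k)).range_inj hf).1 ?_, hk⟩
  rw [Fin.range_comp_succAbove g.injective, hrange, hk, Set.insert_sdiff_self_of_notMem hx]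

end SuccAbove

section Occurrence

variable {l m n : ℕ}

def IsOccurrence (τ : Perm (Fin m)) (σ : Perm (Fin n)) (f : Fin m → Fin n) : Prop :=
  StrictMono f ∧ ∀ i j, τ i < τ j ↔ σ (f i) < σ (f j)

-- Unfolds to the instance used in `patCount`, so that `patCount_eq_card` holds by `rfl`.
instance (τ : Perm (Fin m)) (σ : Perm (Fin n)) : DecidablePred (IsOccurrence τ σ) := fun f =>
  inferInstanceAs (Decidable ((∀ i j, i < j → f i < f j) ∧ ∀ i j, τ i < τ j ↔ σ (f i) < σ (f j)))

theorem patCount_eq_card (τ : Perm (Fin m)) (σ : Perm (Fin n)) :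
    patCount τ σ = #{f | IsOccurrence τ σ f} :=
  rfl

theorem IsOccurrence.comp {τ : Perm (Fin l)} {τ' : Perm (Fin m)} {σ : Perm (Fin n)}
    {h : Fin l → Fin m} {g : Fin m → Fin n} (hh : IsOccurrence τ τ' h)
    (hg : IsOccurrence τ' σ g) : IsOccurrence τ σ (g ∘ h) :=
  ⟨hg.1.comp hh.1, fun i j => (hh.2 i j).trans (hg.2 (h i) (h j))⟩

theorem IsOccurrence.of_comp {τ : Perm (Fin l)} {τ' : Perm (Fin m)} {σ : Perm (Fin n)}
    {h : Fin l → Fin m} {g : Fin m → Fin n} (hgh : IsOccurrence τ σ (g ∘ h))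
    (hg : IsOccurrence τ' σ g) (hh : StrictMono h) : IsOccurrence τ τ' h :=
  ⟨hh, fun i j => (hgh.2 i j).trans (hg.2 (h i) (h j)).symm⟩

theorem IsOccurrence.perm_eq {τ₁ τ₂ : Perm (Fin m)} {σ : Perm (Fin n)} {g : Fin m → Fin n}
    (h₁ : IsOccurrence τ₁ σ g) (h₂ : IsOccurrence τ₂ σ g) : τ₁ = τ₂ :=
  Perm.eq_of_lt_iff_lt fun i j => (h₁.2 i j).trans (h₂.2 i j).symm

theorem exists_isOccurrence (σ : Perm (Fin n)) {g : Fin m → Fin n} (hg : StrictMono g) :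
    ∃ τ, IsOccurrence τ σ g :=
  (exists_perm_lt_iff_lt (σ.injective.comp hg.injective)).imp fun _ hτ => ⟨hg, hτ⟩

theorem card_isOccurrence_succAbove (τ : Perm (Fin m)) (τ' : Perm (Fin (m + 1))) :
    #{k : Fin (m + 1) | IsOccurrence τ τ' k.succAbove} = patCount τ τ' := by
  rw [patCount_eq_card]
  refine card_nbij (fun k => k.succAbove) (fun k hk => by simpa using hk)
    (fun k₁ _ k₂ _ h => Fin.succAbove_left_injective h) fun h hh => ?_
  simp only [coe_filter, mem_univ, true_and, Set.mem_ofPred_eq] at hh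
  obtain ⟨k, rfl⟩ := Fin.exists_succAbove_eq_of_strictMono hh.1
  exact ⟨k, by simpa using hh, rfl⟩

theorem card_factorizations_eq_card_marked_occurrences (τ : Perm (Fin m)) (σ : Perm (Fin n)) :
    #(univ.sigma fun τ' : Perm (Fin (m + 1)) =>
        ({k : Fin (m + 1) | IsOccurrence τ τ' k.succAbove} : Finset _) ×ˢ
          ({g | IsOccurrence τ' σ g} : Finset _))
      = #(({f | IsOccurrence τ σ f} : Finset _).sigma fun f => (univ.image f)ᶜ) := by
  refine card_nbij (fun p => (⟨p.2.2 ∘ p.2.1.succAbove, p.2.2 p.2.1⟩ : Σ _ : Fin m → Fin n, Fin n))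
    ?_ ?_ ?_
  · rintro ⟨τ', k, g⟩ hp
    simp only [mem_coe, mem_sigma, mem_product, mem_filter, mem_univ, true_and, mem_compl,
      mem_image] at hp ⊢
    exact ⟨hp.1.comp hp.2, fun ⟨i, hi⟩ => Fin.succAbove_ne k i (hp.2.1.injective hi)⟩
  · rintro ⟨τ₁, k₁, g₁⟩ hp₁ ⟨τ₂, k₂, g₂⟩ hp₂ heq
    simp only [mem_coe, mem_sigma, mem_product, mem_filter, mem_univ, true_and] at hp₁ hp₂
    simp only [Sigma.mk.injEq, heq_eq_eq] at heq
    obtain ⟨rfl, rfl⟩ := hp₁.2.1.eq_of_comp_succAbove_eq hp₂.2.1 heq.1 heq.2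
    obtain rfl := hp₁.2.perm_eq hp₂.2
    rfl
  · rintro ⟨f, x⟩ hp
    simp only [mem_coe, mem_sigma, mem_filter, mem_univ, true_and, mem_compl, mem_image] at hp
    obtain ⟨g, hg, k, rfl, rfl⟩ := hp.1.1.exists_comp_succAbove_eq hp.2
    obtain ⟨τ', hτ'⟩ := exists_isOccurrence σ hg
    refine ⟨⟨τ', k, g⟩, ?_, rfl⟩
    simp only [mem_coe, mem_sigma, mem_product, mem_filter, mem_univ, true_and]
    exact ⟨hp.1.of_comp hτ' (Fin.strictMono_succAbove k), hτ'⟩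

end Occurrence

theorem pattern_count_recursion_general {m n : ℕ}
    (σ : Equiv.Perm (Fin n)) (τ : Equiv.Perm (Fin m)) :
    (n - m) * patCount τ σ
      = ∑ τ' : Equiv.Perm (Fin (m + 1)), patCount τ τ' * patCount τ' σ := by
  have hfree : ∀ f ∈ ({f | IsOccurrence τ σ f} : Finset _), #(univ.image f)ᶜ = n - m :=
    fun f hf => by
      rw [card_compl, card_image_of_injective _ (mem_filter.1 hf).2.1.injective, card_fin,
        Fintype.card_fin]
  calc (n - m) * patCount τ σ
      = #(({f | IsOccurrence τ σ f} : Finset _).sigma fun f => (univ.image f)ᶜ) := by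
        rw [card_sigma, sum_const_nat hfree, patCount_eq_card, mul_comm]
    _ = #(univ.sigma fun τ' : Perm (Fin (m + 1)) =>
          ({k : Fin (m + 1) | IsOccurrence τ τ' k.succAbove} : Finset _) ×ˢ
            ({g | IsOccurrence τ' σ g} : Finset _)) :=
        (card_factorizations_eq_card_marked_occurrences τ σ).symm
    _ = _ := by
        simp only [card_sigma, card_product, card_isOccurrence_succAbove, patCount_eq_card]

theorem pattern_count_recursion {m n : ℕ} (hmn : m < n)
    (σ : Equiv.Perm (Fin n)) (τ : Equiv.Perm (Fin m)) :
    (n - m) * patCount τ σ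
      = ∑ τ' : Equiv.Perm (Fin (m + 1)), patCount τ τ' * patCount τ' σ :=
  pattern_count_recursion_general σ τ
end

section
/- The m! × (m+1)! pattern-containment matrix B_m, with (τ, τ') entry X^τ(τ') for τ ∈ S_m and τ' ∈ S_{m+1}, has rank m!. -/
/-!
Restricting the columns to the permutations `σ°` gives a square `m! × m!` submatrix. An
occurrence of `τ` in `σ°` omits one position `p`. If `σ` fixes every point before `p`, the
occurrence is `σ` itself. Otherwise let `d < p` be the first point that `σ` moves; then the
entries of `σ°` before the omission start with `0, 1, …, d`, so `τ` agrees with `σ` before `d`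
and `τ d = d < σ d`. Hence `τ ≤ σ` lexicographically, the submatrix is upper triangular with
nonzero diagonal, and its rank `m!` bounds that of the whole matrix from below.
-/

open Equiv Finset

lemma Fin.exists_eq_succAbove_of_strictMono {n : ℕ} {f : Fin n → Fin (n + 1)}
    (hf : StrictMono f) : ∃ p : Fin (n + 1), f = p.succAbove := by
  obtain ⟨p, hp⟩ : ∃ p, p ∉ Set.range f := by
    by_contra! h
    simpa using Fintype.card_le_of_surjective f h
  refine ⟨p, ?_⟩
  rw [orderEmbOfFin_unique (s := {p}ᶜ) (by simp [card_compl])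
    (fun x => by simpa using fun h => hp ⟨x, h⟩) hf,
    orderEmbOfFin_compl_singleton_eq_succAboveOrderEmb]
  rfl

namespace Equiv.Perm

variable {m : ℕ}

lemma val_eq_card_filter_lt {α : Type*} [LinearOrder α] {τ : Perm (Fin m)} {g : Fin m → α}
    (h : ∀ i j, τ i < τ j ↔ g i < g j) (i : Fin m) :
    (τ i : ℕ) = #{j | g j < g i} := by
  simp_rw [← h]
  rw [card_equiv τ (t := Iio (τ i)) (by simp), Fin.card_Iio]

lemma eq_of_lt_iff_lt_s10 {τ σ : Perm (Fin m)} (h : ∀ i j, τ i < τ j ↔ σ i < σ j) : τ = σ :=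
  ext fun i => Fin.ext <| by
    rw [val_eq_card_filter_lt h, val_eq_card_filter_lt fun _ _ => Iff.rfl]

lemma apply_eq_self_of_lt_iff_of_le {τ : Perm (Fin m)} {g : Fin m → ℕ}
    (hg : Function.Injective g) (h : ∀ i j, τ i < τ j ↔ g i < g j) {d : Fin m}
    (hgd : ∀ i ≤ d, g i = i) {i : Fin m} (hi : i ≤ d) : τ i = i := by
  have hid : (i : ℕ) ≤ d := hi
  ext
  rw [val_eq_card_filter_lt h, ← Fin.card_Iio i, hgd i hi]
  congr 1
  ext j
  simp only [mem_filter, mem_univ, true_and, mem_Iio, Fin.lt_def]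
  constructor
  · intro hj
    -- `g` already takes the value `g j < i ≤ d` at the position `g j`
    have hjd : (⟨g j, by omega⟩ : Fin m) ≤ d := Fin.le_def.2 (by dsimp only; omega)
    rwa [← hg ((hgd _ hjd).trans rfl : g ⟨g j, _⟩ = g j)]
  · intro hj
    rwa [hgd j (Fin.le_def.2 (by omega))]

lemma lt_apply_of_forall_lt_apply_eq {σ : Perm (Fin m)} {d : Fin m} (hfix : ∀ j < d, σ j = j)
    (hd : σ d ≠ d) : d < σ d :=
  lt_of_le_of_ne (not_lt.1 fun hlt => hd (σ.injective (hfix _ hlt))) (Ne.symm hd)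

/-- The paper's `σ°`: `σ°(0) = 0` and `σ°(i + 1) = σ(i) + 1`. -/
def prependMin (σ : Perm (Fin m)) : Perm (Fin (m + 1)) :=
  (finSuccEquiv m).symm.permCongr σ.optionCongr

@[simp] lemma prependMin_zero (σ : Perm (Fin m)) : prependMin σ 0 = 0 := by
  simp [prependMin, permCongr_apply]

@[simp] lemma prependMin_succ (σ : Perm (Fin m)) (i : Fin m) :
    prependMin σ i.succ = (σ i).succ := by
  simp [prependMin, permCongr_apply]

lemma prependMin_castSucc {σ : Perm (Fin m)} {i : Fin m} (hfix : ∀ j < i, σ j = j) :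
    prependMin σ i.castSucc = i.castSucc := by
  rcases Fin.eq_zero_or_eq_succ i.castSucc with h0 | ⟨j, hj⟩
  · rw [h0, prependMin_zero]
  · have hji : j < i := by
      rw [Fin.lt_def]
      have := congrArg Fin.val hj
      simp only [Fin.val_castSucc, Fin.val_succ] at this
      omega
    rw [hj, prependMin_succ, hfix j hji]

lemma prependMin_succAbove {σ : Perm (Fin m)} {p : Fin (m + 1)}
    (hfix : ∀ j : Fin m, j.castSucc < p → σ j = j) (i : Fin m) :
    prependMin σ (p.succAbove i) = p.succAbove (σ i) := by
  rcases lt_or_ge i.castSucc p with hi | hi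
  · rw [hfix i hi, Fin.succAbove_of_castSucc_lt _ _ hi, prependMin_castSucc fun j hj =>
      hfix j ((Fin.castSucc_lt_castSucc_iff.2 hj).trans hi)]
  · have hσi : p ≤ (σ i).castSucc := not_lt.1 fun hlt =>
      (σ.injective (hfix _ hlt) ▸ hi).not_gt hlt
    rw [Fin.succAbove_of_le_castSucc _ _ hi, Fin.succAbove_of_le_castSucc _ _ hσi,
      prependMin_succ]

theorem toLex_le_of_lt_iff_prependMin_succAbove {τ σ : Perm (Fin m)} {p : Fin (m + 1)}
    (h : ∀ i j, τ i < τ j ↔ prependMin σ (p.succAbove i) < prependMin σ (p.succAbove j)) :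
    toLex ⇑τ ≤ toLex ⇑σ := by
  by_cases hfix : ∀ j : Fin m, j.castSucc < p → σ j = j
  · refine le_of_eq (congrArg _ (congrArg _ (eq_of_lt_iff_lt_s10 fun i j => ?_)))
    rw [h, prependMin_succAbove hfix, prependMin_succAbove hfix,
      (Fin.strictMono_succAbove p).lt_iff_lt]
  push Not at hfix
  obtain ⟨d, ⟨hdp, hd⟩, hmin⟩ :=
    wellFounded_lt.has_min {j : Fin m | j.castSucc < p ∧ σ j ≠ j} hfix
  have hbelow : ∀ j < d, σ j = j := fun j hj => by_contra fun hne =>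
    hmin j ⟨(Fin.castSucc_lt_castSucc_iff.2 hj).trans hdp, hne⟩ hj
  have hτ : ∀ i ≤ d, τ i = i := fun i hi =>
    apply_eq_self_of_lt_iff_of_le (g := fun i => (prependMin σ (p.succAbove i) : ℕ))
      (Fin.val_injective.comp ((prependMin σ).injective.comp Fin.succAbove_right_injective))
      (by simpa only [Fin.lt_def] using h)
      (fun i hi => by
        have hip : i.castSucc < p := (Fin.castSucc_le_castSucc_iff.2 hi).trans_lt hdp
        rw [Fin.succAbove_of_castSucc_lt _ _ hip,
          prependMin_castSucc fun j hj => hbelow j (hj.trans_le hi)]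
        rfl) hi
  refine le_of_lt ⟨d, fun j hj => ?_, ?_⟩
  · simp [hτ j hj.le, hbelow j hj]
  · simpa [hτ d le_rfl] using lt_apply_of_forall_lt_apply_eq hbelow hd

end Equiv.Perm

open Equiv.Perm

lemma toLex_le_of_patCount_prependMin_ne_zero {m : ℕ} {τ σ : Perm (Fin m)}
    (h : patCount τ (prependMin σ) ≠ 0) : toLex ⇑τ ≤ toLex ⇑σ := by
  obtain ⟨f, hf⟩ := card_ne_zero.1 h
  obtain ⟨hmono, hpat⟩ := (mem_filter.1 hf).2
  obtain ⟨p, rfl⟩ := Fin.exists_eq_succAbove_of_strictMono fun i j => hmono i j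
  exact toLex_le_of_lt_iff_prependMin_succAbove hpat

lemma patCount_prependMin_self_ne_zero {m : ℕ} (σ : Perm (Fin m)) :
    patCount σ (prependMin σ) ≠ 0 :=
  card_ne_zero.2 ⟨Fin.succ, by simp [Fin.succ_lt_succ_iff]⟩

def patternMatrix (R : Type*) [NatCast R] (m n : ℕ) : Matrix (Perm (Fin m)) (Perm (Fin n)) R :=
  Matrix.of fun τ τ' => patCount τ τ'

lemma det_patternMatrix_submatrix_prependMin_ne_zero (R : Type*) [CommRing R] [IsDomain R]
    [CharZero R] (m : ℕ) : ((patternMatrix R m (m + 1)).submatrix id prependMin).det ≠ 0 := by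
  let _ : LinearOrder (Perm (Fin m)) :=
    LinearOrder.lift' (fun σ => toLex ⇑σ) fun _ _ h => DFunLike.coe_injective (congrArg ofLex h)
  have htri : ((patternMatrix R m (m + 1)).submatrix id prependMin).IsUpperTriangular :=
    fun τ σ (hlt : σ < τ) => by
      have hzero : patCount τ (prependMin σ) = 0 := by
        by_contra hne
        exact (toLex_le_of_patCount_prependMin_ne_zero hne).not_gt hlt
      simp [patternMatrix, hzero]
  rw [Matrix.det_of_isUpperTriangular htri, prod_ne_zero_iff]
  intro σ _
  simpa [patternMatrix] using patCount_prependMin_self_ne_zero σ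

theorem pattern_matrix_rank (m : ℕ) :
    Matrix.rank (Matrix.of fun (τ : Equiv.Perm (Fin m)) (τ' : Equiv.Perm (Fin (m + 1))) =>
      (patCount τ τ' : ℚ)) = Nat.factorial m := by
  change (patternMatrix ℚ m (m + 1)).rank = m.factorial
  apply le_antisymm
  · simpa [Fintype.card_perm] using (patternMatrix ℚ m (m + 1)).rank_le_card_height
  · calc m.factorial = ((patternMatrix ℚ m (m + 1)).submatrix id prependMin).rank := by
          rw [Matrix.rank_of_det_ne_zero (det_patternMatrix_submatrix_prependMin_ne_zero ℚ m),
            Fintype.card_perm, Fintype.card_fin]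
      _ ≤ _ := Matrix.rank_submatrix_le _ _ _
end

section
/- For σ ∈ S_m, define σ° ∈ S_{m+1} by σ°(0) = 0, σ°(i) = σ(i-1) + 1 for 1 ≤ i ≤ m. Then σ occurs in σ°, and σ does not occur in any τ ∈ S_{m+1} that is lexicographically smaller than σ° (comparing permutations as words (τ(0), ..., τ(m))). -/
/-- Lexicographic order on permutations of `Fin (m+1)`, viewed as words. -/
def LexLt {m : ℕ} (f g : Fin (m + 1) → Fin (m + 1)) : Prop :=
  ∃ i, (∀ j < i, f j = g j) ∧ f i < g i

/-- The extension `0 · (σ+1)` of a permutation. -/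
def extPerm {m : ℕ} (σ : Equiv.Perm (Fin m)) : Equiv.Perm (Fin (m + 1)) where
  toFun := Fin.cases 0 (fun i => (σ i).succ)
  invFun := Fin.cases 0 (fun j => (σ.symm j).succ)
  left_inv := by
    intro x
    induction x using Fin.cases with
    | zero => simp
    | succ i => simp
  right_inv := by
    intro x
    induction x using Fin.cases with
    | zero => simp
    | succ i => simp

lemma extPerm_zero {m : ℕ} (σ : Equiv.Perm (Fin m)) : extPerm σ 0 = 0 := by
  simp [extPerm]

lemma extPerm_succ {m : ℕ} (σ : Equiv.Perm (Fin m)) (i : Fin m) :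
    extPerm σ i.succ = (σ i).succ := by
  simp [extPerm]

lemma fin_mono_le {m : ℕ} {f : Fin m → Fin (m + 1)}
    (hmono : ∀ i j : Fin m, i < j → f i < f j) :
    ∀ n : ℕ, ∀ h : n < m, n ≤ ((f ⟨n, h⟩ : Fin (m + 1)) : ℕ) := by
  intro n
  induction n with
  | zero => exact fun h => Nat.zero_le _
  | succ n ih =>
    intro h
    have h1 : n < m := by omega
    have h2 : f ⟨n, h1⟩ < f ⟨n + 1, h⟩ := hmono _ _ (by simp [Fin.lt_def])
    have h3 := ih h1
    have h4 : ((f ⟨n, h1⟩ : Fin (m + 1)) : ℕ) < ((f ⟨n + 1, h⟩ : Fin (m + 1)) : ℕ) := h2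
    omega

lemma fin_mono_le' {m : ℕ} {f : Fin m → Fin (m + 1)}
    (hmono : ∀ i j : Fin m, i < j → f i < f j) (a : Fin m) :
    (a : ℕ) ≤ ((f a : Fin (m + 1)) : ℕ) := by
  have := fin_mono_le hmono a.val a.isLt
  simpa using this

lemma fin_mono_gap {m : ℕ} {f : Fin m → Fin (m + 1)}
    (hmono : ∀ i j : Fin m, i < j → f i < f j) :
    ∀ d n : ℕ, ∀ h1 : n < m, ∀ h2 : n + d < m,
      ((f ⟨n, h1⟩ : Fin (m + 1)) : ℕ) + d ≤ ((f ⟨n + d, h2⟩ : Fin (m + 1)) : ℕ) := by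
  intro d
  induction d with
  | zero => intro n h1 h2; simp
  | succ d ih =>
    intro n h1 h2
    have h3 : n + d < m := by omega
    have h4 := ih n h1 h3
    have h5 : f ⟨n + d, h3⟩ < f ⟨n + (d + 1), h2⟩ := hmono _ _ (by simp [Fin.lt_def])
    have h6 : ((f ⟨n + d, h3⟩ : Fin (m + 1)) : ℕ) < ((f ⟨n + (d + 1), h2⟩ : Fin (m + 1)) : ℕ) := h5
    omega

lemma fin_mono_ub {m : ℕ} {f : Fin m → Fin (m + 1)}
    (hmono : ∀ i j : Fin m, i < j → f i < f j) (a : Fin m) :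
    ((f a : Fin (m + 1)) : ℕ) ≤ (a : ℕ) + 1 := by
  have ham : (a : ℕ) < m := a.isLt
  have h2 : (a : ℕ) + (m - 1 - (a : ℕ)) < m := by omega
  have h1 := fin_mono_gap hmono (m - 1 - (a : ℕ)) (a : ℕ) a.isLt h2
  have h3 : ((f ⟨(a : ℕ) + (m - 1 - (a : ℕ)), h2⟩ : Fin (m + 1)) : ℕ) ≤ m :=
    Nat.lt_succ_iff.mp (f _).isLt
  have h4 : ((f ⟨(a : ℕ), a.isLt⟩ : Fin (m + 1)) : ℕ) = ((f a : Fin (m + 1)) : ℕ) := by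
    simp
  omega

/-- Key induction: if the occurrence `f` fixes positions `0..n` and `τ` starts like
`0, σ₀+1, σ₁+1, ...`, then `σ` is the identity on `0..n`. -/
lemma sigma_id {m : ℕ} (σ : Equiv.Perm (Fin m)) (τ : Equiv.Perm (Fin (m + 1)))
    (f : Fin m → Fin (m + 1))
    (hmono : ∀ i j : Fin m, i < j → f i < f j)
    (hpat : ∀ i j, σ i < σ j ↔ τ (f i) < τ (f j))
    (hτ0 : τ 0 = 0)
    (n : ℕ)
    (hτ : ∀ j : Fin m, (j : ℕ) < n → τ j.succ = (σ j).succ)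
    (hQ : ∀ b : ℕ, b ≤ n → ∀ h : b < m, ((f ⟨b, h⟩ : Fin (m + 1)) : ℕ) = b) :
    ∀ b : ℕ, b ≤ n → ∀ h : b < m, σ ⟨b, h⟩ = ⟨b, h⟩ := by
  intro b
  induction b using Nat.strong_induction_on with
  | _ b IH =>
    intro hbn hbm
    have hpos : ∀ c : ℕ, c ≤ b → ∀ hc : c < m + 1, τ ⟨c, hc⟩ = ⟨c, hc⟩ := by
      intro c hcb hc
      match c with
      | 0 =>
        have : (⟨0, hc⟩ : Fin (m + 1)) = 0 := rfl
        rw [this, hτ0]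
      | d + 1 =>
        have hdm : d < m := by omega
        have h1 : τ (⟨d, hdm⟩ : Fin m).succ = (σ ⟨d, hdm⟩).succ :=
          hτ _ (show d < n by omega)
        have h2 : σ ⟨d, hdm⟩ = ⟨d, hdm⟩ := IH d (by omega) (by omega) hdm
        have h3 : (⟨d + 1, hc⟩ : Fin (m + 1)) = (⟨d, hdm⟩ : Fin m).succ := by
          simp [Fin.ext_iff]
        rw [h3, h1, h2]
    have hbm1 : b < m + 1 := by omega
    have hfb : f ⟨b, hbm⟩ = ⟨b, hbm1⟩ := Fin.ext (hQ b hbn hbm)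
    have hτfb : τ (f ⟨b, hbm⟩) = ⟨b, hbm1⟩ := by
      rw [hfb]; exact hpos b le_rfl _
    have hstep2 : ∀ b' : Fin m, b < (b' : ℕ) → σ ⟨b, hbm⟩ < σ b' := by
      intro b' hb'
      rw [hpat, hτfb, Fin.lt_def]
      by_contra hcon
      push_neg at hcon
      have hcon' : ((τ (f b') : Fin (m + 1)) : ℕ) ≤ b := hcon
      have he : τ ⟨((τ (f b') : Fin (m + 1)) : ℕ), (τ (f b')).isLt⟩ =
          ⟨((τ (f b') : Fin (m + 1)) : ℕ), (τ (f b')).isLt⟩ := hpos _ hcon' _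
      have he2 : τ ⟨((τ (f b') : Fin (m + 1)) : ℕ), (τ (f b')).isLt⟩ = τ (f b') := by
        rw [he]
      have he3 := τ.injective he2
      have he4 : ((f b' : Fin (m + 1)) : ℕ) ≤ b := by
        rw [← he3]
        exact hcon'
      have he5 := fin_mono_le' hmono b'
      omega
    have hσge : b ≤ ((σ ⟨b, hbm⟩ : Fin m) : ℕ) := by
      by_contra hlt
      push_neg at hlt
      have h2 := IH _ hlt (by omega) (σ ⟨b, hbm⟩).isLt
      simp only [Fin.eta] at h2
      have h4 := σ.injective h2
      have h5 : ((σ ⟨b, hbm⟩ : Fin m) : ℕ) = b := congrArg Fin.val h4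
      omega
    rcases lt_trichotomy ((σ.symm ⟨b, hbm⟩ : Fin m) : ℕ) b with h | h | h
    · exfalso
      have hc : σ (σ.symm ⟨b, hbm⟩) = ⟨b, hbm⟩ := σ.apply_symm_apply _
      have h2 := IH _ h (by omega) (σ.symm ⟨b, hbm⟩).isLt
      simp only [Fin.eta] at h2
      rw [hc] at h2
      have h4 : b = ((σ.symm ⟨b, hbm⟩ : Fin m) : ℕ) := congrArg Fin.val h2
      omega
    · have hc : σ (σ.symm ⟨b, hbm⟩) = ⟨b, hbm⟩ := σ.apply_symm_apply _
      have h3 : (σ.symm ⟨b, hbm⟩ : Fin m) = ⟨b, hbm⟩ := Fin.ext h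
      rw [h3] at hc
      exact hc
    · exfalso
      have h2 := hstep2 (σ.symm ⟨b, hbm⟩) h
      have hc : σ (σ.symm ⟨b, hbm⟩) = ⟨b, hbm⟩ := σ.apply_symm_apply _
      rw [hc, Fin.lt_def] at h2
      simp only [Fin.val_mk] at h2
      omega

theorem lex_least_containing {m : ℕ} (σ : Equiv.Perm (Fin m)) :
    ∃ ρ : Equiv.Perm (Fin (m + 1)),
      (ρ 0 = 0 ∧ ∀ i : Fin m, ρ i.succ = (σ i).succ) ∧
      0 < patCount σ ρ ∧
      ∀ τ : Equiv.Perm (Fin (m + 1)), LexLt (⇑τ) (⇑ρ) → patCount σ τ = 0 := by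
  classical
  refine ⟨extPerm σ, ⟨extPerm_zero σ, extPerm_succ σ⟩, ?_, ?_⟩
  · rw [patCount, Finset.card_pos]
    refine ⟨Fin.succ, Finset.mem_filter.mpr ⟨Finset.mem_univ _, ?_, ?_⟩⟩
    · intro i j hij
      exact Fin.succ_lt_succ_iff.mpr hij
    · intro i j
      rw [extPerm_succ, extPerm_succ, Fin.succ_lt_succ_iff]
  · intro τ hlex
    obtain ⟨i, hagree, hlt⟩ := hlex
    rcases Fin.eq_zero_or_eq_succ i with rfl | ⟨k, rfl⟩
    · rw [extPerm_zero] at hlt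
      exact absurd hlt (Fin.not_lt_zero _)
    rw [patCount, Finset.card_eq_zero, Finset.filter_eq_empty_iff]
    intro f _
    rintro ⟨hmono, hpat⟩
    -- basic facts
    have hτ0 : τ 0 = 0 := by
      have h := hagree 0 (Fin.succ_pos k)
      rw [h, extPerm_zero]
    have hτj : ∀ j : Fin m, (j : ℕ) < (k : ℕ) → τ j.succ = (σ j).succ := by
      intro j hj
      have h := hagree j.succ (Fin.succ_lt_succ_iff.mpr hj)
      rw [h, extPerm_succ]
    have hw : ((τ k.succ : Fin (m + 1)) : ℕ) ≤ ((σ k : Fin m) : ℕ) := by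
      rw [extPerm_succ, Fin.lt_def] at hlt
      simpa using Nat.lt_succ_iff.mp hlt
    have hlb := fin_mono_le' hmono
    have hub := fin_mono_ub hmono
    have hfk : ((f k : Fin (m + 1)) : ℕ) = (k : ℕ) ∨
        ((f k : Fin (m + 1)) : ℕ) = (k : ℕ) + 1 := by
      have h1 := hlb k
      have h2 := hub k
      omega
    rcases hfk with hfk | hfk
    · -- Case A : f k = k, derive σ b = b for b ≤ k, contradiction with τ (k+1) ≤ k
      have hQ : ∀ b : ℕ, b ≤ (k : ℕ) → ∀ h : b < m, ((f ⟨b, h⟩ : Fin (m + 1)) : ℕ) = b := by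
        intro b hb h
        have h1 := fin_mono_le hmono b h
        have h2 : ((f ⟨b, h⟩ : Fin (m + 1)) : ℕ) ≤ b + 1 := by
          have := hub ⟨b, h⟩
          simpa using this
        by_contra hcon
        have h3 : ((f ⟨b, h⟩ : Fin (m + 1)) : ℕ) = b + 1 := by omega
        have h4 : b + ((k : ℕ) - b) < m := by omega
        have h5 := fin_mono_gap hmono ((k : ℕ) - b) b h h4
        have h6 : (⟨b + ((k : ℕ) - b), h4⟩ : Fin m) = k :=
          Fin.ext (show b + ((k : ℕ) - b) = (k : ℕ) by omega)
        rw [h6] at h5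
        omega
      have hσ := sigma_id σ τ f hmono hpat hτ0 (k : ℕ) hτj hQ
      -- τ is the identity on positions 0..k
      have hpos : ∀ c : ℕ, c ≤ (k : ℕ) → ∀ hc : c < m + 1, τ ⟨c, hc⟩ = ⟨c, hc⟩ := by
        intro c hcb hc
        match c with
        | 0 =>
          have : (⟨0, hc⟩ : Fin (m + 1)) = 0 := rfl
          rw [this, hτ0]
        | d + 1 =>
          have hdm : d < m := by omega
          have h1 : τ (⟨d, hdm⟩ : Fin m).succ = (σ ⟨d, hdm⟩).succ :=
            hτj _ (show d < (k : ℕ) by omega)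
          have h2 : σ ⟨d, hdm⟩ = ⟨d, hdm⟩ := hσ d (by omega) hdm
          have h3 : (⟨d + 1, hc⟩ : Fin (m + 1)) = (⟨d, hdm⟩ : Fin m).succ := by
            simp [Fin.ext_iff]
          rw [h3, h1, h2]
      have hσk : ((σ k : Fin m) : ℕ) = (k : ℕ) := by
        have := hσ (k : ℕ) le_rfl k.isLt
        simp only [Fin.eta] at this
        rw [this]
      have hu : ((τ k.succ : Fin (m + 1)) : ℕ) ≤ (k : ℕ) := by omega
      have he : τ ⟨((τ k.succ : Fin (m + 1)) : ℕ), (τ k.succ).isLt⟩ =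
          ⟨((τ k.succ : Fin (m + 1)) : ℕ), (τ k.succ).isLt⟩ := hpos _ hu _
      have he2 : τ ⟨((τ k.succ : Fin (m + 1)) : ℕ), (τ k.succ).isLt⟩ = τ k.succ := by
        rw [he]
      have he3 := τ.injective he2
      have he4 : ((τ k.succ : Fin (m + 1)) : ℕ) = (k : ℕ) + 1 := by
        have := congrArg Fin.val he3
        simpa using this
      omega
    · -- Case B : f k = k + 1
      set w : ℕ := ((τ k.succ : Fin (m + 1)) : ℕ) with hwdef
      have hexP : ∃ n : ℕ, ∃ hs : n < m, ((f ⟨n, hs⟩ : Fin (m + 1)) : ℕ) = n + 1 := by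
        refine ⟨(k : ℕ), k.isLt, ?_⟩
        have hk : (⟨(k : ℕ), k.isLt⟩ : Fin m) = k := by simp
        rw [hk]; exact hfk
      set s : ℕ := Nat.find hexP with hsdef
      obtain ⟨hsm, hfs⟩ := Nat.find_spec hexP
      have hsk : s ≤ (k : ℕ) := by
        apply Nat.find_min'
        refine ⟨k.isLt, ?_⟩
        have hk : (⟨(k : ℕ), k.isLt⟩ : Fin m) = k := by simp
        rw [hk]; exact hfk
      have hmin : ∀ b : ℕ, b < s → ∀ hb : b < m, ((f ⟨b, hb⟩ : Fin (m + 1)) : ℕ) = b := by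
        intro b hbs hb
        have h1 := Nat.find_min hexP hbs
        push_neg at h1
        have h2 := h1 hb
        have h3 := fin_mono_le hmono b hb
        have h4 : ((f ⟨b, hb⟩ : Fin (m + 1)) : ℕ) ≤ b + 1 := by
          have := hub ⟨b, hb⟩
          simpa using this
        omega
      have hσid : ∀ b : ℕ, b < s → ∀ h : b < m, σ ⟨b, h⟩ = ⟨b, h⟩ := by
        rcases Nat.eq_zero_or_pos s with hs0 | hs1
        · intro b hb; omega
        · intro b hb h
          have := sigma_id σ τ f hmono hpat hτ0 (s - 1)
            (fun j hj => hτj j (by omega)) (fun b hb h => hmin b (by omega) h)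
          exact this b (by omega) h
      -- τ is the identity on positions 0..s
      have hposB : ∀ c : ℕ, c ≤ s → ∀ hc : c < m + 1, τ ⟨c, hc⟩ = ⟨c, hc⟩ := by
        intro c hcb hc
        match c with
        | 0 =>
          have : (⟨0, hc⟩ : Fin (m + 1)) = 0 := rfl
          rw [this, hτ0]
        | d + 1 =>
          have hdm : d < m := by omega
          have h1 : τ (⟨d, hdm⟩ : Fin m).succ = (σ ⟨d, hdm⟩).succ :=
            hτj _ (show d < (k : ℕ) by omega)
          have h2 : σ ⟨d, hdm⟩ = ⟨d, hdm⟩ := hσid d (by omega) hdm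
          have h3 : (⟨d + 1, hc⟩ : Fin (m + 1)) = (⟨d, hdm⟩ : Fin m).succ := by
            simp [Fin.ext_iff]
          rw [h3, h1, h2]
      have hsm1 : s < m + 1 := by omega
      set ps : Fin (m + 1) := ⟨s, hsm1⟩ with hpsdef
      have hτps : τ ps = ps := hposB s le_rfl hsm1
      -- ps is not in the range of f
      have hnotin : ∀ a : Fin m, f a ≠ ps := by
        intro a hcon
        have hval : ((f a : Fin (m + 1)) : ℕ) = s := by rw [hcon]
        rcases lt_trichotomy ((a : ℕ)) s with h | h | h
        · have := hmin (a : ℕ) h a.isLt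
          have ha : (⟨(a : ℕ), a.isLt⟩ : Fin m) = a := by simp
          rw [ha] at this
          omega
        · have ha : (⟨s, hsm⟩ : Fin m) = a := Fin.ext h.symm
          rw [ha] at hfs
          omega
        · have := hlb a
          omega
      -- f k = k.succ
      have hfk' : f k = k.succ := Fin.ext (by simpa using hfk)
      -- s < w
      have hswne : s ≠ w := by
        intro hcon
        have : τ ps = τ k.succ := Fin.ext (by rw [hτps]; exact hcon)
        have := τ.injective this
        have := congrArg Fin.val this
        simp [hpsdef] at this
        omega
      have hsw : s < w := by
        rcases Nat.eq_zero_or_pos s with hs0 | hs1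
        · omega
        · -- use pattern at position s-1 vs k
          have htm : s - 1 < m := by omega
          have hσt : σ ⟨s - 1, htm⟩ = ⟨s - 1, htm⟩ := hσid (s - 1) (by omega) htm
          have hσkge : s ≤ ((σ k : Fin m) : ℕ) := by
            by_contra hcon
            push_neg at hcon
            have h2 := hσid ((σ k : Fin m) : ℕ) hcon (σ k).isLt
            have h3 : σ ⟨((σ k : Fin m) : ℕ), (σ k).isLt⟩ = σ k := by rw [h2]
            have h4 := σ.injective h3
            have h5 := congrArg Fin.val h4
            simp at h5
            omega
          have hltσ : σ ⟨s - 1, htm⟩ < σ k := by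
            rw [hσt, Fin.lt_def]
            simp
            omega
          have := (hpat _ _).mp hltσ
          rw [hfk'] at this
          have hfs1 : f ⟨s - 1, htm⟩ = ⟨s - 1, by omega⟩ :=
            Fin.ext (hmin (s - 1) (by omega) htm)
          rw [hfs1] at this
          have hτs1 : τ ⟨s - 1, by omega⟩ = ⟨s - 1, by omega⟩ := hposB (s - 1) (by omega) _
          rw [hτs1, Fin.lt_def] at this
          simp at this
          omega
      -- counting
      have hwpos : 0 < w := by omega
      set A : Finset (Fin m) := Finset.univ.filter (fun a => σ a < σ k) with hAdef
      set T : Finset (Fin (m + 1)) :=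
        (Finset.univ.filter (fun v : Fin (m + 1) => v < τ k.succ)).erase ps with hTdef
      have hmaps : ∀ a ∈ A, τ (f a) ∈ T := by
        intro a ha
        rw [hAdef, Finset.mem_filter] at ha
        rw [hTdef, Finset.mem_erase, Finset.mem_filter]
        refine ⟨?_, Finset.mem_univ _, ?_⟩
        · intro hcon
          have : τ (f a) = τ ps := by rw [hcon, hτps]
          exact hnotin a (τ.injective this)
        · have := (hpat a k).mp ha.2
          rwa [hfk'] at this
      have hinj : ∀ a ∈ A, ∀ b ∈ A, τ (f a) = τ (f b) → a = b := by
        intro a _ b _ hab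
        have h1 := τ.injective hab
        by_contra hne
        rcases lt_or_gt_of_ne hne with h | h
        · exact absurd h1 (ne_of_lt (hmono a b h))
        · exact absurd h1.symm (ne_of_lt (hmono b a h))
      have hcardle : A.card ≤ T.card := Finset.card_le_card_of_injOn _ hmaps hinj
      have hTcard : T.card = w - 1 := by
        have hpsT : ps ∈ Finset.univ.filter (fun v : Fin (m + 1) => v < τ k.succ) := by
          rw [Finset.mem_filter]
          exact ⟨Finset.mem_univ _, by rw [Fin.lt_def]; exact hsw⟩
        rw [hTdef, Finset.card_erase_of_mem hpsT]
        congr 1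
        have : (Finset.univ.filter (fun v : Fin (m + 1) => v < τ k.succ)) =
            Finset.Iio (τ k.succ) := by
          ext v
          simp
        rw [this, Fin.card_Iio]
      have hAcard : A.card = ((σ k : Fin m) : ℕ) := by
        have hbij : A.card = (Finset.univ.filter (fun v : Fin m => v < σ k)).card := by
          apply Finset.card_bij (fun a _ => σ a)
          · intro a ha
            rw [Finset.mem_filter] at ha ⊢
            exact ⟨Finset.mem_univ _, ha.2⟩
          · intro a _ b _ hab
            exact σ.injective hab
          · intro v hv
            rw [Finset.mem_filter] at hv
            refine ⟨σ.symm v, ?_, by simp⟩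
            rw [Finset.mem_filter]
            refine ⟨Finset.mem_univ _, ?_⟩
            rw [σ.apply_symm_apply]
            exact hv.2
        rw [hbij]
        have : (Finset.univ.filter (fun v : Fin m => v < σ k)) = Finset.Iio (σ k) := by
          ext v
          simp
        rw [this, Fin.card_Iio]
      omega
end

section
/- For n ≥ 2 and k ≥ 1, the k-fold product i_n^(k) = i_n ⊗ ... ⊗ i_n of the identity permutation i_n ∈ S_n maps each x ∈ Z_{n^k} to the number whose base-n expansion is the reverse of the base-n expansion of x (using k digits). In particular, i_n^(k) is an involution. -/
/-- The product `σ ⊗ τ` of `σ ∈ S_n` and `τ ∈ S_m`, as a function on `{0,...,nm-1}`. -/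
def otimes (n m : ℕ) (σ τ : ℕ → ℕ) : ℕ → ℕ :=
  fun x => τ (x / n) + m * σ (x % n)

/-- Iterated (left-associated) product of a list of permutations (with degrees). -/
def prodPerm (l : List (ℕ × (ℕ → ℕ))) : ℕ × (ℕ → ℕ) :=
  l.foldl (fun p q => (p.1 * q.1, otimes p.1 q.1 p.2 q.2)) (1, id)

/-- `i_n^(k)`: the `k`-fold product of the identity permutation of `{0,...,n-1}`. -/
def idPow (n k : ℕ) : ℕ → ℕ := (prodPerm (List.replicate k (n, id))).2

/-!
Peeling the last factor off `i_n^(k+1) = i_n^(k) ⊗ i_n` gives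
`i_n^(k+1)(x) = ⌊x / n^k⌋ + n · i_n^(k)(x mod n^k)`: the leading digit of `x` becomes the units digit
and the remaining `k` digits are reversed recursively. Induction on `k` gives the digit-reversal
formula, which read the other way round says `i_n^(k+1)(x) = (x mod n) · n^k + i_n^(k)(⌊x / n⌋)`.
Applying the first recursion and then the second, the digit moved to the bottom is moved back to
the top, and the involution property follows by induction.
-/

theorem Nat.mod_pow_div_pow_mod {x n i k : ℕ} (hik : i < k) :
    x % n ^ k / n ^ i % n = x / n ^ i % n := by
  have hdvd : n ^ i * n ∣ n ^ k := by rw [← pow_succ]; exact pow_dvd_pow n hik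
  rw [← Nat.mod_mul_right_div_self, ← Nat.mod_mul_right_div_self x, Nat.mod_mod_of_dvd x hdvd]

theorem prodPerm_replicate_fst (n k : ℕ) : (prodPerm (List.replicate k (n, id))).1 = n ^ k := by
  induction k with
  | zero => rfl
  | succ k ih =>
    rw [List.replicate_succ', prodPerm, List.foldl_append, ← prodPerm]
    simp [ih, pow_succ]

theorem idPow_zero (n : ℕ) : idPow n 0 = id := rfl

theorem idPow_succ (n k x : ℕ) : idPow n (k + 1) x = x / n ^ k + n * idPow n k (x % n ^ k) := by
  rw [idPow, List.replicate_succ', prodPerm, List.foldl_append, ← prodPerm]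
  simp [otimes, prodPerm_replicate_fst, idPow]

theorem idPow_lt {n k x : ℕ} (hx : x < n ^ k) : idPow n k x < n ^ k := by
  induction k generalizing x with
  | zero => simpa [idPow_zero] using hx
  | succ k ih =>
    have hpos : 0 < n ^ k := pow_pos (Nat.pos_of_lt_mul_left hx) k
    rw [idPow_succ, pow_succ']
    exact Nat.add_mul_lt_mul_of_lt_of_lt (Nat.div_lt_of_lt_mul hx) (ih (Nat.mod_lt x hpos))

theorem idPow_eq_sum {n k x : ℕ} (hx : x < n ^ k) :
    idPow n k x = ∑ j ∈ Finset.range k, (x / n ^ (k - 1 - j) % n) * n ^ j := by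
  induction k generalizing x with
  | zero => simpa [idPow_zero] using hx
  | succ k ih =>
    have hpos : 0 < n ^ k := pow_pos (Nat.pos_of_lt_mul_left hx) k
    have hlead : x / n ^ k < n := Nat.div_lt_of_lt_mul hx
    rw [idPow_succ, ih (Nat.mod_lt x hpos), Finset.sum_range_succ', Finset.mul_sum]
    simp only [Nat.sub_zero, Nat.add_sub_cancel, pow_zero, mul_one, Nat.mod_eq_of_lt hlead]
    rw [add_comm]
    congr 1
    refine Finset.sum_congr rfl fun j hj => ?_
    rw [Finset.mem_range] at hj
    rw [Nat.mod_pow_div_pow_mod (by omega), show k - (j + 1) = k - 1 - j by omega, pow_succ']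
    ring

theorem idPow_succ' {n k x : ℕ} (hx : x < n ^ (k + 1)) :
    idPow n (k + 1) x = x % n * n ^ k + idPow n k (x / n) := by
  have hquot : x / n < n ^ k := Nat.div_lt_of_lt_mul (by rwa [← pow_succ'])
  rw [idPow_eq_sum hx, idPow_eq_sum hquot, Finset.sum_range_succ, add_comm]
  simp only [Nat.add_sub_cancel, Nat.sub_self, pow_zero, Nat.div_one]
  congr 1
  refine Finset.sum_congr rfl fun j hj => ?_
  rw [Finset.mem_range] at hj
  rw [Nat.div_div_eq_div_mul, ← pow_succ', show k - 1 - j + 1 = k - j by omega]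

theorem idPow_idPow {n k x : ℕ} (hx : x < n ^ k) : idPow n k (idPow n k x) = x := by
  induction k generalizing x with
  | zero => rfl
  | succ k ih =>
    have hpos : 0 < n := Nat.pos_of_lt_mul_left hx
    have hlead : x / n ^ k < n := Nat.div_lt_of_lt_mul hx
    rw [idPow_succ' (idPow_lt hx), idPow_succ, Nat.add_mul_mod_self_left, Nat.mod_eq_of_lt hlead,
      Nat.add_mul_div_left _ _ hpos, Nat.div_eq_of_lt hlead, zero_add,
      ih (Nat.mod_lt x (pow_pos hpos k)), Nat.div_add_mod']

theorem idPow_reverses_digits_general (n k : ℕ) :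
    (∀ x < n ^ k, idPow n k x = ∑ j ∈ Finset.range k, (x / n ^ (k - 1 - j) % n) * n ^ j) ∧
    (∀ x < n ^ k, idPow n k (idPow n k x) = x) :=
  ⟨fun _ => idPow_eq_sum, fun _ => idPow_idPow⟩

theorem idPow_reverses_digits (n k : ℕ) (hn : 2 ≤ n) (hk : 1 ≤ k) :
    (∀ x < n ^ k, idPow n k x = ∑ j ∈ Finset.range k, (x / n ^ (k - 1 - j) % n) * n ^ j) ∧
    (∀ x < n ^ k, idPow n k (idPow n k x) = x) :=
  idPow_reverses_digits_general n k
end
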